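/- arXiv:2605.29936 — 7 statements merged into one kernel-verified Lean document; each statement's English description precedes it below -/
import Mathlib

section
/- For every m ≥ 1 and every n ≥ 0, the number of partitions of n whose mex equals m is p(n − m(m−1)/2) − p(n − m(m+1)/2), where p(j) denotes the number of partitions of j and p(j) = 0 when j < 0 (equivalently, when the argument n − m(m−1)/2 or n − m(m+1)/2 is negative the corresponding term is 0). -/
/-- The mex of an integer partition: the smallest positive integer that is not a part. -/
noncomputable def Nat.Partition.mex {n : ℕ} (p : n.Partition) : ℕ :=
  sInf {k : ℕ | 0 < k ∧ k ∉ p.parts}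

/-- The number of integer partitions of `j ∈ ℤ`, with value `0` for negative `j`. -/
noncomputable def partitionsZ (j : ℤ) : ℤ :=
  if 0 ≤ j then (Fintype.card (Nat.Partition j.toNat) : ℤ) else 0

/-- The multiset `{1, 2, …, k}`. -/
def staircase (k : ℕ) : Multiset ℕ := (Multiset.range k).map (· + 1)

lemma staircase_nodup (k : ℕ) : (staircase k).Nodup :=
  (Multiset.nodup_range k).map (fun _ _ h => by omega)

lemma mem_staircase {k a : ℕ} : a ∈ staircase k ↔ 1 ≤ a ∧ a ≤ k := by
  simp only [staircase, Multiset.mem_map, Multiset.mem_range]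
  constructor
  · rintro ⟨i, hi, rfl⟩; omega
  · rintro ⟨h1, h2⟩; exact ⟨a - 1, by omega, by omega⟩

lemma staircase_sum (k : ℕ) : (staircase k).sum = (k + 1).choose 2 := by
  have h1 : (staircase k).sum = ∑ i ∈ Finset.range k, (i + 1) := rfl
  have h2 := Finset.sum_range_succ' (fun i => i) k
  simp only [add_zero] at h2
  rw [h1, ← h2, Finset.sum_range_id, Nat.choose_two_right]

/-- Partitions of `n` containing each of `1, …, k` are counted by `partitionsZ (n - T_k)`. -/
lemma card_contains (n k : ℕ) :
    (Nat.card {p : n.Partition // staircase k ≤ p.parts} : ℤ) =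
      partitionsZ ((n : ℤ) - ((k + 1).choose 2 : ℤ)) := by
  by_cases h : (k + 1).choose 2 ≤ n
  · -- bijection with partitions of n - T
    have e : {p : n.Partition // staircase k ≤ p.parts} ≃ Nat.Partition (n - (k + 1).choose 2) :=
      { toFun := fun p => ⟨p.1.parts - staircase k,
          fun {i} hi => p.1.parts_pos (Multiset.mem_of_le (tsub_le_self) hi),
          by
            have h1 : p.1.parts - staircase k + staircase k = p.1.parts :=
              tsub_add_cancel_of_le p.2
            have h2 := congrArg Multiset.sum h1
            rw [Multiset.sum_add, staircase_sum, p.1.parts_sum] at h2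
            omega⟩
        invFun := fun q => ⟨⟨q.parts + staircase k,
          fun {i} hi => by
            rcases Multiset.mem_add.mp hi with h' | h'
            · exact q.parts_pos h'
            · have := mem_staircase.mp h'; omega,
          by rw [Multiset.sum_add, staircase_sum, q.parts_sum]; omega⟩,
          le_add_self⟩
        left_inv := fun p => by
          apply Subtype.ext; apply Nat.Partition.ext
          exact tsub_add_cancel_of_le p.2
        right_inv := fun q => by
          apply Nat.Partition.ext
          exact add_tsub_cancel_right _ _ }
    rw [Nat.card_congr e, Nat.card_eq_fintype_card]
    rw [partitionsZ, if_pos (by omega)]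
    have harg : ((n : ℤ) - ((k + 1).choose 2 : ℤ)).toNat = n - (k + 1).choose 2 := by
      omega
    rw [harg]
  · -- empty on both sides
    have : IsEmpty {p : n.Partition // staircase k ≤ p.parts} := by
      constructor
      rintro ⟨p, hp⟩
      have h1 : p.parts - staircase k + staircase k = p.parts :=
        tsub_add_cancel_of_le hp
      have h2 := congrArg Multiset.sum h1
      rw [Multiset.sum_add, staircase_sum, p.parts_sum] at h2
      omega
    rw [Nat.card_of_isEmpty, partitionsZ, if_neg (by omega)]
    rfl

lemma mex_eq_iff {n : ℕ} (p : n.Partition) (m : ℕ) (hm : 1 ≤ m) :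
    p.mex = m ↔ staircase (m - 1) ≤ p.parts ∧ m ∉ p.parts := by
  classical
  simp only [Nat.Partition.mex]
  have hne : {k : ℕ | 0 < k ∧ k ∉ p.parts}.Nonempty := by
    refine ⟨n + 1, Nat.succ_pos n, fun hmem => ?_⟩
    have := Multiset.single_le_sum (fun x _ => Nat.zero_le x) _ hmem
    rw [p.parts_sum] at this
    omega
  constructor
  · intro h
    have hmem := Nat.sInf_mem hne
    rw [h] at hmem
    refine ⟨(Multiset.le_iff_subset (staircase_nodup _)).mpr fun a ha => ?_, hmem.2⟩
    have ha' := mem_staircase.mp ha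
    by_contra hna
    have : a ∈ {k : ℕ | 0 < k ∧ k ∉ p.parts} := ⟨by omega, hna⟩
    have := Nat.sInf_le this
    omega
  · rintro ⟨hle, hnm⟩
    have hsub := (Multiset.le_iff_subset (staircase_nodup _)).mp hle
    refine le_antisymm (Nat.sInf_le ⟨by omega, hnm⟩) ?_
    by_contra hlt
    push_neg at hlt
    have hmem := Nat.sInf_mem hne
    have h1 : sInf {k : ℕ | 0 < k ∧ k ∉ p.parts} ∈ p.parts :=
      hsub (mem_staircase.mpr ⟨hmem.1, by omega⟩)
    exact hmem.2 h1

/-- the number of partitions of `n` with mex `m` is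
`p(n − m(m−1)/2) − p(n − m(m+1)/2)`. -/
theorem stmt_1 (m : ℕ) (hm : 1 ≤ m) (n : ℕ) :
    (Nat.card {p : n.Partition // p.mex = m} : ℤ) =
      partitionsZ ((n : ℤ) - (m.choose 2 : ℤ)) -
        partitionsZ ((n : ℤ) - ((m + 1).choose 2 : ℤ)) := by
  classical
  -- split the set of partitions containing 1..m-1 by whether m is a part
  have split : ∀ p : n.Partition,
      (staircase (m - 1) ≤ p.parts ∧ m ∈ p.parts) ↔ staircase m ≤ p.parts := by
    intro p
    constructor
    · rintro ⟨h1, h2⟩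
      refine (Multiset.le_iff_subset (staircase_nodup _)).mpr fun a ha => ?_
      have ha' := mem_staircase.mp ha
      rcases eq_or_ne a m with rfl | hne
      · exact h2
      · exact (Multiset.le_iff_subset (staircase_nodup _)).mp h1
          (mem_staircase.mpr ⟨ha'.1, by omega⟩)
    · intro h
      have hsub := (Multiset.le_iff_subset (staircase_nodup _)).mp h
      exact ⟨(Multiset.le_iff_subset (staircase_nodup _)).mpr fun a ha => by
          have ha' := mem_staircase.mp ha
          exact hsub (mem_staircase.mpr ⟨ha'.1, by omega⟩),
        hsub (mem_staircase.mpr ⟨hm, le_refl m⟩)⟩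
  -- the key counting identity
  have e : {p : n.Partition // staircase m ≤ p.parts} ⊕ {p : n.Partition // p.mex = m}
      ≃ {p : n.Partition // staircase (m - 1) ≤ p.parts} := by
    refine Equiv.sumCongr ?_ ?_ |>.trans
      (Equiv.sumCompl (p := fun x : {p : n.Partition // staircase (m - 1) ≤ p.parts} =>
        m ∈ x.1.parts))
    · exact ((Equiv.subtypeSubtypeEquivSubtypeInter _ _).trans
        (Equiv.subtypeEquivRight fun p => split p)).symm
    · exact (Equiv.subtypeEquivRight fun p => mex_eq_iff p m hm).trans
        (Equiv.subtypeSubtypeEquivSubtypeInter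
          (fun p : n.Partition => staircase (m - 1) ≤ p.parts)
          (fun p => m ∉ p.parts)).symm
  have hc : Nat.card {p : n.Partition // staircase m ≤ p.parts}
      + Nat.card {p : n.Partition // p.mex = m}
      = Nat.card {p : n.Partition // staircase (m - 1) ≤ p.parts} := by
    rw [← Nat.card_sum, Nat.card_congr e]
  have h1 := card_contains n (m - 1)
  have h2 := card_contains n m
  have hm1 : m - 1 + 1 = m := by omega
  rw [hm1] at h1
  have := congrArg (fun x : ℕ => (x : ℤ)) hc
  push_cast at this
  omega
end

section
/- Let T be a finite set of positive integers and, for n ≥ 0, let c_T(n) be the number of compositions of n having no part belonging to T. Then in the ring ℤ⟦X⟧ of formal power series one has (1 − 2X + Σ_{i∈T} (X^i − X^{i+1})) · Σ_{n≥0} c_T(n) X^n = 1 − X. -/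
/-!
Splitting off the first part of a composition gives `c(n) = ∑_{1 ≤ k ≤ n, k ∉ T} c(n - k)` for
`n > 0`, that is `(1 - P) · C = 1` where `P = ∑_{k ≥ 1, k ∉ T} X^k`. As `T` consists of positive
integers, `P = X/(1 - X) - ∑_{i ∈ T} X^i`, and `(1 - X)(1 - P)` is the factor in front of `C`.
-/

open PowerSeries

namespace Composition

open Finset.HasAntidiagonal (antidiagonal mem_antidiagonal)

noncomputable def countWithParts (p : ℕ → Prop) (n : ℕ) : ℕ :=
  Nat.card {c : Composition n // ∀ i ∈ c.blocks, p i}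

variable (p : ℕ → Prop)

theorem countWithParts_zero : countWithParts p 0 = 1 :=
  Nat.card_eq_one_iff_exists.2 ⟨⟨⟨[], by simp, rfl⟩, by simp⟩,
    fun c => Subtype.ext (Composition.ext ((blocks_eq_nil c.1).2 rfl))⟩

theorem countWithParts_eq_sum [DecidablePred p] {n : ℕ} (hn : 0 < n) :
    countWithParts p n = ∑ x ∈ antidiagonal n with 0 < x.1 ∧ p x.1, countWithParts p x.2 := by
  set s := {x ∈ antidiagonal n | 0 < x.1 ∧ p x.1}
  let cons : (Σ x : s, {c : Composition x.1.2 // ∀ i ∈ c.blocks, p i}) →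
      {c : Composition n // ∀ i ∈ c.blocks, p i} := fun ⟨⟨x, hx⟩, c⟩ =>
    have hx : x.1 + x.2 = n ∧ 0 < x.1 ∧ p x.1 := by simpa [s] using hx
    ⟨⟨x.1 :: c.1.blocks, by simpa [hx.2.1] using fun _ => c.1.blocks_pos, by simp [hx.1]⟩,
      by simpa [hx.2.2] using c.2⟩
  have hcons : Function.Bijective cons := by
    constructor
    · rintro ⟨⟨⟨k, m⟩, hx⟩, c⟩ ⟨⟨⟨k', m'⟩, hx'⟩, c'⟩ h
      obtain ⟨rfl, hblocks⟩ : k = k' ∧ c.1.blocks = c'.1.blocks := by simpa [cons] using h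
      obtain rfl : m = m' := by simp only [s, Finset.mem_filter, mem_antidiagonal] at hx hx'; omega
      obtain rfl : c = c' := Subtype.ext (Composition.ext hblocks)
      rfl
    · rintro ⟨⟨_ | ⟨k, l⟩, hpos, hsum⟩, hl⟩
      · exact absurd hsum.symm hn.ne'
      · simp only [List.mem_cons, forall_eq_or_imp, List.sum_cons] at hpos hsum hl
        refine ⟨⟨⟨(k, l.sum), by simp [s, hsum, hpos.1, hl.1]⟩,
          ⟨⟨l, hpos.2 _, rfl⟩, hl.2⟩⟩, rfl⟩
  rw [countWithParts, ← Nat.card_eq_of_bijective cons hcons, Nat.card_sigma, ← Finset.sum_coe_sort s]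
  rfl

end Composition

namespace PowerSeries

variable (R : Type*) [Ring R]

def partSeries (p : ℕ → Prop) [DecidablePred p] : R⟦X⟧ :=
  mk fun k => if 0 < k ∧ p k then 1 else 0

theorem one_sub_partSeries_mul_countWithParts (p : ℕ → Prop) [DecidablePred p] :
    (1 - partSeries R p) * mk (fun n => (Composition.countWithParts p n : R)) = 1 := by
  ext n
  rw [sub_mul, one_mul, map_sub, coeff_mk, coeff_one, coeff_mul]
  rcases n.eq_zero_or_pos with rfl | hn
  · simp [partSeries, Composition.countWithParts_zero]
  · rw [Composition.countWithParts_eq_sum p hn, if_neg hn.ne', Nat.cast_sum, Finset.sum_filter]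
    simp [partSeries, ite_mul]

theorem partSeries_not_mem {T : Finset ℕ} (hT : ∀ i ∈ T, 0 < i) :
    partSeries R (· ∉ T) = X * mk 1 - ∑ i ∈ T, X ^ i := by
  ext (_ | n)
  · have : 0 ∉ T := fun h => (hT 0 h).false
    simp [partSeries, this, Finset.sum_eq_zero fun i hi => zero_pow (M₀ := R) (hT i hi).ne']
  · by_cases h : n + 1 ∈ T <;> simp [partSeries, h]

end PowerSeries

/-- if `c_T(n)` is the number of compositions of `n` with no part in `T`
(a finite set of positive integers), then
`(1 − 2X + Σ_{i∈T} (X^i − X^(i+1))) · Σ_{n≥0} c_T(n) Xⁿ = 1 − X` in `ℤ⟦X⟧`. -/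
theorem stmt_3 (T : Finset ℕ) (hT : ∀ i ∈ T, 0 < i) :
    (1 - 2 * (X : PowerSeries ℤ) + ∑ i ∈ T, ((X : PowerSeries ℤ) ^ i - X ^ (i + 1))) *
        PowerSeries.mk
          (fun n => (Nat.card {c : Composition n // ∀ p ∈ c.blocks, p ∉ T} : ℤ)) =
      1 - X := by
  have hsum : ∑ i ∈ T, ((X : ℤ⟦X⟧) ^ i - X ^ (i + 1)) = (1 - X) * ∑ i ∈ T, X ^ i := by
    rw [Finset.mul_sum]
    exact Finset.sum_congr rfl fun i _ => by ring
  have hfactor : 1 - 2 * (X : ℤ⟦X⟧) + ∑ i ∈ T, (X ^ i - X ^ (i + 1)) =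
      (1 - X) * (1 - partSeries ℤ (· ∉ T)) := by
    rw [hsum, partSeries_not_mem ℤ hT]
    linear_combination X * mk_one_mul_one_sub_eq_one ℤ
  rw [hfactor, mul_assoc]
  exact (congrArg _ (one_sub_partSeries_mul_countWithParts ℤ _)).trans (mul_one _)
end

section
/- For every m ≥ 1, the generating function Γ_m(X) = Σ_{n≥0} γ_{n,m} X^n, where γ_{n,m} is the number of compositions of n having mex m, is a rational power series: there exist polynomials P, Q ∈ ℤ[X] with Q ≠ 0 such that Q · Γ_m = P in ℤ⟦X⟧. -/
/-!
A composition has mex `m` exactly when it avoids the part `m` and uses every part in `[1, m)`.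
Inclusion–exclusion over the set `T ⊆ [1, m)` of parts that are missed writes `Γ_m` as an
alternating sum of the generating series of compositions avoiding `{m} ∪ T`.

Splitting off the first part, the series `G` of compositions whose parts lie in an allowed set
satisfies `G = 1 + S G`, where `S` is the sum of `X^k` over the allowed `k > 0`. When the forbidden
set `F` is finite and misses `0`, `S = X / (1 - X) - P` with `P = ∑_{k ∈ F} X^k`, hence
`((1 - X)(1 + P) - X) G = 1 - X`. Rational series form a subalgebra, which closes the argument.
-/

/-- The mex of a composition: the smallest positive integer that is not a part. -/
noncomputable def Composition.mex {n : ℕ} (c : Composition n) : ℕ :=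
  sInf {k : ℕ | 0 < k ∧ k ∉ c.blocks}

open Finset PowerSeries
open scoped Polynomial

def Composition.cons {j : ℕ} (c : Composition j) {i n : ℕ} (hi : 0 < i) (h : i + j = n) :
    Composition n where
  blocks := i :: c.blocks
  blocks_pos hk := (List.mem_cons.1 hk).elim (· ▸ hi) c.blocks_pos
  blocks_sum := by rw [List.sum_cons, c.blocks_sum, h]

section PartsIn

variable (p : ℕ → Prop) [DecidablePred p]

theorem card_compositions_zero : #{c : Composition 0 | ∀ k ∈ c.blocks, p k} = 1 := by
  rw [filter_true_of_mem, card_univ, composition_card]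
  · rfl
  intro c _ k hk
  exact absurd (c.blocks_sum ▸ List.le_sum_of_mem hk) (c.blocks_pos hk).not_ge

theorem card_compositions_succ (n : ℕ) :
    #{c : Composition (n + 1) | ∀ k ∈ c.blocks, p k} =
      ∑ x ∈ antidiagonal (n + 1),
        if 0 < x.1 ∧ p x.1 then #{c : Composition x.2 | ∀ k ∈ c.blocks, p k} else 0 := by
  rw [← sum_filter, ← card_sigma]
  symm
  refine card_bij (fun x hx => x.2.cons (mem_filter.1 (mem_sigma.1 hx).1).2.1
    (HasAntidiagonal.mem_antidiagonal.1 (mem_filter.1 (mem_sigma.1 hx).1).1)) ?_ ?_ ?_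
  · rintro ⟨x, c⟩ hx
    simp only [mem_sigma, mem_filter, mem_univ, true_and] at hx ⊢
    intro k hk
    rcases List.mem_cons.1 hk with rfl | hk
    exacts [hx.1.2.2, hx.2 k hk]
  · rintro ⟨⟨i, j⟩, c⟩ hx ⟨⟨i', j'⟩, c'⟩ hx' h
    simp only [mem_sigma, mem_filter, HasAntidiagonal.mem_antidiagonal] at hx hx'
    have hblocks : i :: c.blocks = i' :: c'.blocks := congrArg Composition.blocks h
    obtain ⟨rfl, hblocks⟩ := List.cons_eq_cons.1 hblocks
    obtain rfl : j = j' := by omega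
    obtain rfl : c = c' := Composition.ext hblocks
    rfl
  · intro c hc
    simp only [mem_filter, mem_univ, true_and] at hc
    rcases c with ⟨_ | ⟨i, t⟩, pos, sum⟩
    · simp at sum
    · refine ⟨⟨(i, t.sum), ⟨t, fun hk => pos (List.mem_cons_of_mem i hk), rfl⟩⟩, ?_, rfl⟩
      simp only [List.sum_cons] at sum
      simp only [mem_sigma, mem_filter, HasAntidiagonal.mem_antidiagonal, mem_univ, true_and]
      exact ⟨⟨sum, pos List.mem_cons_self, hc i List.mem_cons_self⟩,
        fun k hk => hc k (List.mem_cons_of_mem i hk)⟩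

noncomputable def compositionSeries : ℤ⟦X⟧ :=
  mk fun n => (#{c : Composition n | ∀ k ∈ c.blocks, p k} : ℤ)

theorem compositionSeries_eq_one_add_mul :
    compositionSeries p =
      1 + mk (fun k => if 0 < k ∧ p k then 1 else 0) * compositionSeries p := by
  ext (_ | n)
  · simp [compositionSeries, card_compositions_zero]
  · simp only [compositionSeries, map_add, coeff_mk, coeff_one, coeff_mul, card_compositions_succ]
    push_cast
    simp [ite_mul]

end PartsIn

def rationalSeries (R : Type*) [CommRing R] [IsDomain R] : Subalgebra R R⟦X⟧ where
  carrier := {f | ∃ P Q : R[X], Q ≠ 0 ∧ (Q : R⟦X⟧) * f = P}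
  mul_mem' := by
    rintro f g ⟨P, Q, hQ, hf⟩ ⟨P', Q', hQ', hg⟩
    refine ⟨P * P', Q * Q', mul_ne_zero hQ hQ', ?_⟩
    rw [Polynomial.coe_mul, Polynomial.coe_mul, ← hf, ← hg]
    ring
  add_mem' := by
    rintro f g ⟨P, Q, hQ, hf⟩ ⟨P', Q', hQ', hg⟩
    refine ⟨P * Q' + Q * P', Q * Q', mul_ne_zero hQ hQ', ?_⟩
    rw [Polynomial.coe_mul, Polynomial.coe_add, Polynomial.coe_mul, Polynomial.coe_mul, ← hf, ← hg]
    ring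
  algebraMap_mem' r := ⟨Polynomial.C r, 1, one_ne_zero, by simp⟩

theorem compositionSeries_avoiding_mem_rationalSeries (F : Finset ℕ) (hF : 0 ∉ F) :
    compositionSeries (· ∉ F) ∈ rationalSeries ℤ := by
  set P : ℤ[X] := ∑ k ∈ F, Polynomial.X ^ k
  have hparts :
      mk (fun k => if 0 < k ∧ k ∉ F then 1 else 0) = X * PowerSeries.mk 1 - (P : ℤ⟦X⟧) := by
    ext (_ | n)
    · simp [P, Polynomial.coeff_X_pow, hF]
    · by_cases hn : n + 1 ∈ F <;> simp [P, coeff_succ_X_mul, Polynomial.coeff_X_pow, hn]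
  have hG := compositionSeries_eq_one_add_mul (· ∉ F)
  rw [hparts] at hG
  refine ⟨1 - Polynomial.X, (1 - Polynomial.X) * (1 + P) - Polynomial.X, fun h => ?_, ?_⟩
  · simpa using congrArg (Polynomial.eval 1) h
  · push_cast
    linear_combination (1 - X) * hG + X * compositionSeries (· ∉ F) * mk_one_mul_one_sub_eq_one ℤ

theorem Composition.mex_eq_iff {n m : ℕ} (c : Composition n) (hm : 0 < m) :
    c.mex = m ↔ m ∉ c.blocks ∧ ∀ k ∈ Ico 1 m, k ∈ c.blocks := by
  change sInf {k | 0 < k ∧ k ∉ c.blocks} = m ↔ _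
  constructor
  · intro h
    have hmem : m ∈ {k | 0 < k ∧ k ∉ c.blocks} :=
      h ▸ Nat.sInf_mem (Nat.nonempty_of_pos_sInf (h ▸ hm))
    refine ⟨hmem.2, fun k hk => by_contra fun hkc => ?_⟩
    have := h ▸ Nat.sInf_le (s := {k | 0 < k ∧ k ∉ c.blocks}) ⟨(mem_Ico.1 hk).1, hkc⟩
    exact (mem_Ico.1 hk).2.not_ge this
  · rintro ⟨hmc, hbelow⟩
    refine IsLeast.csInf_eq ⟨⟨hm, hmc⟩, fun k ⟨hk, hkc⟩ => ?_⟩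
    exact not_lt.1 fun hkm => hkc (hbelow k (mem_Ico.2 ⟨hk, hkm⟩))

theorem card_mex_eq_sum_powerset (n : ℕ) {m : ℕ} (hm : 0 < m) :
    (#{c : Composition n | c.mex = m} : ℤ) =
      ∑ T ∈ (Ico 1 m).powerset,
        (-1 : ℤ) ^ #T * #{c : Composition n | ∀ k ∈ c.blocks, k ∉ insert m T} := by
  let avoiding (k : ℕ) : Finset (Composition n) := {c | k ∉ c.blocks}
  have hmex : ({c | c.mex = m} : Finset (Composition n)) =
      {c ∈ (Ico 1 m).inf fun k => (avoiding k)ᶜ | m ∉ c.blocks} := by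
    ext c
    simp [avoiding, mem_inf, c.mex_eq_iff hm, and_comm]
  have havoid (T : Finset ℕ) :
      ({c | ∀ k ∈ c.blocks, k ∉ insert m T} : Finset (Composition n)) =
        {c ∈ T.inf avoiding | m ∉ c.blocks} := by
    ext c
    simp only [mem_filter, mem_univ, true_and, mem_inf, avoiding, mem_insert, not_or]
    grind
  have := inclusion_exclusion_sum_inf_compl (Ico 1 m) avoiding
    (fun c => if m ∉ c.blocks then (1 : ℤ) else 0)
  simp only [sum_boole, zsmul_eq_mul, Int.cast_id] at this
  simp only [hmex, this, havoid]

theorem mk_card_mex_eq_sum {m : ℕ} (hm : 0 < m) :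
    PowerSeries.mk (fun n => (Nat.card {c : Composition n // c.mex = m} : ℤ)) =
      ∑ T ∈ (Ico 1 m).powerset, (-1 : ℤ) ^ #T • compositionSeries (· ∉ insert m T) := by
  ext n
  rw [coeff_mk, Nat.card_eq_fintype_card, Fintype.card_subtype, card_mex_eq_sum_powerset n hm,
    map_sum]
  simp only [map_zsmul, compositionSeries, coeff_mk, smul_eq_mul]

/-- for every `m ≥ 1`, the generating function of compositions with mex `m`
is a rational power series. -/
theorem stmt_4 (m : ℕ) (hm : 1 ≤ m) :
    ∃ P Q : Polynomial ℤ, Q ≠ 0 ∧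
      (Q : PowerSeries ℤ) *
          PowerSeries.mk (fun n => (Nat.card {c : Composition n // c.mex = m} : ℤ)) =
        (P : PowerSeries ℤ) := by
  show _ ∈ rationalSeries ℤ
  rw [mk_card_mex_eq_sum hm]
  refine Subalgebra.sum_mem _ fun T hT => Subalgebra.smul_mem _ ?_ _
  refine compositionSeries_avoiding_mem_rationalSeries _ ?_
  simp only [mem_insert, not_or]
  exact ⟨by omega, fun h0 => by simpa using mem_powerset.1 hT h0⟩
end

section
/- Let b_n be the number of compositions of n having mex 2, i.e., compositions with at least one part equal to 1 and no part equal to 2. Then in ℤ⟦X⟧ one has (1 − 2X + X^2 − X^3)(1 − X − X^3) · Σ_{n≥0} b_n X^n = X(1 − X)^2. -/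
/-! Splitting off the first part shows that the generating function `F` of the compositions
whose parts all lie in a set `S` satisfies `F = 1 + G * F`, where `G = ∑_{k ∈ S, k > 0} X^k`.
For `S = {k | k ≠ 2}` one has `G = X/(1 - X) - X²`, and for `S = {k | 3 ≤ k}` one has
`G = X³/(1 - X)`; hence these two series are `(1 - X)/(1 - 2X + X² - X³)` and
`(1 - X)/(1 - X - X³)`. A composition without a part 2 has mex 2 exactly when it has a part 1,
i.e. exactly when not all of its parts are at least 3, so the mex-2 series is the difference of
the two. -/

open PowerSeries Finset

namespace Composition

abbrev WithParts (P : ℕ → Prop) (n : ℕ) := {c : Composition n // ∀ i ∈ c.blocks, P i}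

theorem blocks_ne_nil {n : ℕ} (c : Composition (n + 1)) : c.blocks ≠ [] := by
  simp [blocks_eq_nil]

theorem head_add_sum_tail {n : ℕ} (c : Composition (n + 1)) :
    c.blocks.head c.blocks_ne_nil + c.blocks.tail.sum = n + 1 := by
  rw [← List.sum_cons, List.cons_head_tail, c.blocks_sum]

namespace WithParts

variable {P : ℕ → Prop}

def cons {n : ℕ} (k : {k : Fin (n + 1) // P (k + 1)}) (c : WithParts P (n - k)) :
    WithParts P (n + 1) :=
  ⟨⟨(k + 1) :: c.1.blocks, by simpa using fun _ => c.1.blocks_pos,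
    by have := k.1.isLt; simp [c.1.blocks_sum]; omega⟩,
    by simpa using ⟨k.2, c.2⟩⟩

def uncons {n : ℕ} (c : WithParts P (n + 1)) :
    Σ k : {k : Fin (n + 1) // P (k + 1)}, WithParts P (n - k) :=
  have hhead := List.head_mem c.1.blocks_ne_nil
  have hpos := c.1.one_le_blocks hhead
  have hsum := c.1.head_add_sum_tail
  ⟨⟨⟨c.1.blocks.head _ - 1, by omega⟩, by simpa [Nat.sub_add_cancel hpos] using c.2 _ hhead⟩,
    ⟨⟨c.1.blocks.tail, fun hi => c.1.blocks_pos (List.mem_of_mem_tail hi), by simp; omega⟩,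
      fun i hi => c.2 i (List.mem_of_mem_tail hi)⟩⟩

def consEquiv (n : ℕ) :
    (Σ k : {k : Fin (n + 1) // P (k + 1)}, WithParts P (n - k)) ≃ WithParts P (n + 1) where
  toFun x := cons x.1 x.2
  invFun := uncons
  left_inv _ := rfl
  right_inv c := by
    refine Subtype.ext (Composition.ext ?_)
    have hpos := c.1.one_le_blocks (List.head_mem c.1.blocks_ne_nil)
    simp [cons, uncons, Nat.sub_add_cancel hpos]

variable (P)

theorem card_zero : Nat.card (WithParts P 0) = 1 := by
  have hall : ∀ c : Composition 0, ∀ i ∈ c.blocks, P i := fun c => by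
    simp [c.blocks_eq_nil.mpr rfl]
  rw [Nat.card_congr (Equiv.subtypeUnivEquiv hall), Nat.card_eq_fintype_card, composition_card]
  rfl

variable [DecidablePred P]

theorem card_succ (n : ℕ) :
    Nat.card (WithParts P (n + 1)) =
      ∑ k ∈ range (n + 1), if P (k + 1) then Nat.card (WithParts P (n - k)) else 0 := by
  rw [← Nat.card_congr (consEquiv n), Nat.card_sigma, ← Fin.sum_univ_eq_sum_range
    (fun k => if P (k + 1) then Nat.card (WithParts P (n - k)) else 0), ← sum_filter]
  exact (sum_subtype _ (by simp) fun k : Fin (n + 1) => Nat.card (WithParts P (n - k))).symm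

end WithParts

variable (P : ℕ → Prop) (R : Type*)

noncomputable def genFun [Semiring R] : R⟦X⟧ :=
  PowerSeries.mk fun n => (Nat.card (WithParts P n) : R)

variable [DecidablePred P]

noncomputable def partSeries [Semiring R] : R⟦X⟧ :=
  PowerSeries.mk fun k => if k ≠ 0 ∧ P k then 1 else 0

theorem genFun_eq_one_add_partSeries_mul [Semiring R] :
    genFun P R = 1 + partSeries P R * genFun P R := by
  ext (_ | n)
  · simp only [genFun, partSeries, coeff_mk, WithParts.card_zero, map_add, coeff_one, coeff_mul]
    simp
  · rw [genFun, coeff_mk, WithParts.card_succ, map_add, coeff_mul,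
      Nat.sum_antidiagonal_eq_sum_range_succ_mk, sum_range_succ' _ (n + 1)]
    simp only [partSeries, coeff_mk, coeff_one]
    simp

theorem partSeries_ne_two [Ring R] : partSeries (· ≠ 2) R = X * PowerSeries.mk 1 - X ^ 2 := by
  ext (_ | _ | _ | n) <;> simp [partSeries, coeff_X_pow]

theorem partSeries_three_le [Semiring R] : partSeries (3 ≤ ·) R = X ^ 3 * PowerSeries.mk 1 := by
  ext n
  simp only [partSeries, coeff_mk, coeff_X_pow_mul', Pi.one_apply]
  congr 1
  grind

theorem genFun_ne_two [CommRing R] : (1 - 2 * X + X ^ 2 - X ^ 3) * genFun (· ≠ 2) R = 1 - X := by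
  have h := genFun_eq_one_add_partSeries_mul (· ≠ 2) R
  rw [partSeries_ne_two] at h
  linear_combination (1 - X) * h + X * genFun (· ≠ 2) R * mk_one_mul_one_sub_eq_one R

theorem genFun_three_le [CommRing R] : (1 - X - X ^ 3) * genFun (3 ≤ ·) R = 1 - X := by
  have h := genFun_eq_one_add_partSeries_mul (3 ≤ ·) R
  rw [partSeries_three_le] at h
  linear_combination (1 - X) * h + X ^ 3 * genFun (3 ≤ ·) R * mk_one_mul_one_sub_eq_one R

theorem card_mex_two_add_card_three_le (n : ℕ) :
    Nat.card {c : Composition n // 1 ∈ c.blocks ∧ 2 ∉ c.blocks} + Nat.card (WithParts (3 ≤ ·) n) =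
      Nat.card (WithParts (· ≠ 2) n) := by
  have hthree (c : Composition n) : (∀ i ∈ c.blocks, 3 ≤ i) ↔ 1 ∉ c.blocks ∧ 2 ∉ c.blocks := by
    have := fun i (hi : i ∈ c.blocks) => c.one_le_blocks hi
    grind
  have htwo (c : Composition n) : (∀ i ∈ c.blocks, i ≠ 2) ↔ 2 ∉ c.blocks := List.forall_mem_ne'
  simp only [Nat.card_eq_fintype_card, Fintype.card_subtype, hthree, htwo]
  rw [← card_filter_add_card_filter_not (s := univ.filter fun c : Composition n => 2 ∉ c.blocks)
    (fun c => 1 ∈ c.blocks), filter_filter, filter_filter]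
  simp only [and_comm]

end Composition

/-- if `b n` is the number of compositions of `n` with mex 2 (at least one
part equal to 1 and no part equal to 2), then
`(1 − 2X + X² − X³)(1 − X − X³) · Σ bₙ Xⁿ = X(1 − X)²` in `ℤ⟦X⟧`. -/
theorem stmt_6 :
    (1 - 2 * (X : PowerSeries ℤ) + X ^ 2 - X ^ 3) * (1 - X - X ^ 3) *
        PowerSeries.mk
          (fun n => (Nat.card {c : Composition n // 1 ∈ c.blocks ∧ 2 ∉ c.blocks} : ℤ)) =
      X * (1 - X) ^ 2 := by
  have hmex : PowerSeries.mk
      (fun n => (Nat.card {c : Composition n // 1 ∈ c.blocks ∧ 2 ∉ c.blocks} : ℤ)) =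
        Composition.genFun (· ≠ 2) ℤ - Composition.genFun (3 ≤ ·) ℤ := by
    ext n
    simp only [Composition.genFun, map_sub, coeff_mk,
      ← Composition.card_mex_two_add_card_three_le n]
    push_cast
    ring
  rw [hmex]
  linear_combination (1 - X - X ^ 3) * Composition.genFun_ne_two ℤ -
    (1 - 2 * X + X ^ 2 - X ^ 3) * Composition.genFun_three_le ℤ
end

section
/- Let c_n be the number of compositions of n having mex 3, i.e., compositions in which both 1 and 2 occur as parts but 3 does not. Then in ℤ⟦X⟧ one has (1 − X + X^2)(1 − X − X^2)(1 − 2X + X^3 − X^4)(1 − X − X^2 + X^3 − X^4)(1 − X − X^4) · Σ_{n≥0} c_n X^n = X^3 (1 − X)^3 (2 − 3X + X^3 − 2X^4). -/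
/-!
Let `A_S` be the generating function of compositions with no part in a finite set `S ∌ 0`.
Splitting off the first part gives `A_S = 1 + P_S A_S`, where `P_S = X/(1 - X) - ∑_{k ∈ S} X^k`
enumerates the allowed parts; hence `(1 - 2X + (1 - X) ∑_{k ∈ S} X^k) A_S = 1 - X`. For
`S = {3}, {1,3}, {2,3}, {1,2,3}` the factor is `1 - 2X + X³ - X⁴`, `1 - X - X² + X³ - X⁴`,
`(1 - X + X²)(1 - X - X²)` and `1 - X - X⁴`, and inclusion–exclusion on the parts `1` and `2`
expresses the mex-3 series as `A_{3} - A_{1,3} - A_{2,3} + A_{1,2,3}`.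
-/

open PowerSeries Finset

def avoidingCompositions (S : Finset ℕ) : ℕ → Finset (List ℕ)
  | 0 => {[]}
  | n + 1 => ((Icc 1 (n + 1)).filter (· ∉ S)).attach.biUnion fun i =>
      (avoidingCompositions S (n + 1 - i)).image (List.cons i)
decreasing_by have := (mem_filter.mp i.2).1; rw [mem_Icc] at this; omega

theorem mem_avoidingCompositions {S : Finset ℕ} {n : ℕ} {l : List ℕ} :
    l ∈ avoidingCompositions S n ↔ l.sum = n ∧ ∀ i ∈ l, 0 < i ∧ i ∉ S := by
  induction l generalizing n with
  | nil => cases n <;> simp [avoidingCompositions]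
  | cons a t ih =>
    cases n with
    | zero =>
      simp only [avoidingCompositions, mem_singleton, reduceCtorEq, false_iff]
      rintro ⟨hsum, hparts⟩
      have ha := (hparts a List.mem_cons_self).1
      simp only [List.sum_cons] at hsum
      omega
    | succ n =>
      simp only [avoidingCompositions, mem_biUnion, mem_attach, true_and, Subtype.exists,
        mem_filter, mem_Icc, mem_image, List.cons.injEq]
      grind

theorem card_avoidingCompositions_succ (S : Finset ℕ) (n : ℕ) :
    #(avoidingCompositions S (n + 1)) =
      ∑ i ∈ (Icc 1 (n + 1)).filter (· ∉ S), #(avoidingCompositions S (n + 1 - i)) := by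
  rw [avoidingCompositions, card_biUnion]
  · rw [sum_attach _ fun i => #((avoidingCompositions S (n + 1 - i)).image (List.cons i))]
    exact sum_congr rfl fun i _ => card_image_of_injective _ (List.cons_injective (a := i))
  · intro i _ j _ hij
    simp only [disjoint_left, mem_image]
    rintro _ ⟨l, -, rfl⟩ ⟨l', -, h⟩
    exact hij (Subtype.ext (List.cons_eq_cons.mp h).1.symm)

theorem avoidingCompositions_insert (k : ℕ) (S : Finset ℕ) (n : ℕ) :
    avoidingCompositions (insert k S) n = (avoidingCompositions S n).filter (k ∉ ·) := by
  ext l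
  simp only [mem_filter, mem_avoidingCompositions, mem_insert]
  grind

theorem natCard_compositions_eq_card_filter (P : List ℕ → Prop) [DecidablePred P] (n : ℕ) :
    Nat.card {c : Composition n // P c.blocks} = #((avoidingCompositions ∅ n).filter P) := by
  rw [← Nat.card_eq_finsetCard]
  refine Nat.card_congr
    { toFun := fun c => ⟨c.1.blocks, ?_⟩
      invFun := fun l => ⟨⟨l.1, ?_, ?_⟩, ?_⟩
      left_inv := fun c => rfl
      right_inv := fun l => rfl }
  · exact mem_filter.mpr ⟨mem_avoidingCompositions.mpr
      ⟨c.1.blocks_sum, fun i hi => ⟨c.1.blocks_pos hi, notMem_empty i⟩⟩, c.2⟩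
  · exact fun hi => ((mem_avoidingCompositions.mp (mem_filter.mp l.2).1).2 _ hi).1
  · exact (mem_avoidingCompositions.mp (mem_filter.mp l.2).1).1
  · exact (mem_filter.mp l.2).2

theorem card_filter_and_add_card_filter_not_add_card_filter_not {α : Type*} (s : Finset α)
    (p q : α → Prop) [DecidablePred p] [DecidablePred q] :
    #(s.filter fun a => p a ∧ q a) + #(s.filter fun a => ¬p a) + #(s.filter fun a => ¬q a) =
      #s + #((s.filter fun a => ¬q a).filter fun a => ¬p a) := by
  rw [card_eq_sum_ones s]
  simp only [filter_filter, card_filter, ← sum_add_distrib]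
  refine sum_congr rfl fun a _ => ?_
  split_ifs <;> simp_all

theorem natCard_mex_three_inclusion_exclusion (n : ℕ) :
    Nat.card {c : Composition n // 1 ∈ c.blocks ∧ 2 ∈ c.blocks ∧ 3 ∉ c.blocks} +
        #(avoidingCompositions {1, 3} n) + #(avoidingCompositions {2, 3} n) =
      #(avoidingCompositions {3} n) + #(avoidingCompositions {1, 2, 3} n) := by
  have hmex : (avoidingCompositions ∅ n).filter (fun l => 1 ∈ l ∧ 2 ∈ l ∧ 3 ∉ l) =
      (avoidingCompositions {3} n).filter fun l => 1 ∈ l ∧ 2 ∈ l := by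
    ext l
    simp only [mem_filter, mem_avoidingCompositions, mem_singleton]
    grind
  rw [natCard_compositions_eq_card_filter (fun l : List ℕ => 1 ∈ l ∧ 2 ∈ l ∧ 3 ∉ l), hmex,
    avoidingCompositions_insert 1 {3}, avoidingCompositions_insert 1 {2, 3},
    avoidingCompositions_insert 2 {3}]
  exact card_filter_and_add_card_filter_not_add_card_filter_not _ (1 ∈ ·) (2 ∈ · : List ℕ → Prop)

def avoidingSeries (S : Finset ℕ) : ℤ⟦X⟧ := PowerSeries.mk fun n => #(avoidingCompositions S n)

def allowedPartSeries (S : Finset ℕ) : ℤ⟦X⟧ :=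
  PowerSeries.mk fun i => if 0 < i ∧ i ∉ S then 1 else 0

theorem allowedPartSeries_eq (S : Finset ℕ) (hS : 0 ∉ S) :
    allowedPartSeries S = X * PowerSeries.mk 1 - ∑ k ∈ S, X ^ k := by
  ext i
  simp only [allowedPartSeries, coeff_mk, map_sub, map_sum, coeff_X_pow, sum_ite_eq]
  rcases i with _ | i
  · simp [hS]
  · simp only [coeff_succ_X_mul, coeff_mk, Pi.one_apply, Nat.succ_pos, true_and]
    split_ifs <;> rfl

theorem avoidingSeries_eq_one_add_allowedPartSeries_mul (S : Finset ℕ) :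
    avoidingSeries S = 1 + allowedPartSeries S * avoidingSeries S := by
  ext (_ | n)
  · simp [avoidingSeries, allowedPartSeries, avoidingCompositions]
  · rw [map_add, coeff_one, if_neg n.succ_ne_zero, zero_add, coeff_mul,
      Nat.sum_antidiagonal_eq_sum_range_succ
        (fun i j => coeff i (allowedPartSeries S) * coeff j (avoidingSeries S))]
    simp only [avoidingSeries, allowedPartSeries, coeff_mk, card_avoidingCompositions_succ, ite_mul,
      one_mul, zero_mul]
    rw [← sum_filter]
    push_cast
    congr 1
    ext i
    simp only [mem_filter, mem_Icc, mem_range, Nat.succ_eq_add_one]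
    grind

theorem mul_avoidingSeries_eq_one_sub_X (S : Finset ℕ) (hS : 0 ∉ S) :
    (1 - 2 * X + (1 - X) * ∑ k ∈ S, X ^ k) * avoidingSeries S = 1 - X := by
  have h := avoidingSeries_eq_one_add_allowedPartSeries_mul S
  rw [allowedPartSeries_eq S hS] at h
  linear_combination (1 - X) * h + X * avoidingSeries S * mk_one_mul_one_sub_eq_one (S := ℤ)

/-- if `c n` is the number of compositions of `n` with mex 3 (both 1 and 2
occur as parts but 3 does not), then
`(1 − X + X²)(1 − X − X²)(1 − 2X + X³ − X⁴)(1 − X − X² + X³ − X⁴)(1 − X − X⁴) · Σ cₙ Xⁿ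
  = X³(1 − X)³(2 − 3X + X³ − 2X⁴)` in `ℤ⟦X⟧`. -/
theorem stmt_7 :
    (1 - (X : PowerSeries ℤ) + X ^ 2) * (1 - X - X ^ 2) * (1 - 2 * X + X ^ 3 - X ^ 4) *
        (1 - X - X ^ 2 + X ^ 3 - X ^ 4) * (1 - X - X ^ 4) *
        PowerSeries.mk
          (fun n =>
            (Nat.card {c : Composition n //
              1 ∈ c.blocks ∧ 2 ∈ c.blocks ∧ 3 ∉ c.blocks} : ℤ)) =
      X ^ 3 * (1 - X) ^ 3 * (2 - 3 * X + X ^ 3 - 2 * X ^ 4) := by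
  have hmex : PowerSeries.mk (fun n => (Nat.card {c : Composition n //
        1 ∈ c.blocks ∧ 2 ∈ c.blocks ∧ 3 ∉ c.blocks} : ℤ)) =
      avoidingSeries {3} - avoidingSeries {1, 3} - avoidingSeries {2, 3} +
        avoidingSeries {1, 2, 3} := by
    ext n
    have := natCard_mex_three_inclusion_exclusion n
    simp only [avoidingSeries, map_add, map_sub, coeff_mk]
    omega
  have h3 := mul_avoidingSeries_eq_one_sub_X {3} (by decide)
  have h13 := mul_avoidingSeries_eq_one_sub_X {1, 3} (by decide)
  have h23 := mul_avoidingSeries_eq_one_sub_X {2, 3} (by decide)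
  have h123 := mul_avoidingSeries_eq_one_sub_X {1, 2, 3} (by decide)
  norm_num [sum_insert] at h3 h13 h23 h123
  rw [hmex]
  linear_combination
    (1 - X + X ^ 2) * (1 - X - X ^ 2) * (1 - X - X ^ 2 + X ^ 3 - X ^ 4) * (1 - X - X ^ 4) * h3
    - (1 - X + X ^ 2) * (1 - X - X ^ 2) * (1 - 2 * X + X ^ 3 - X ^ 4) * (1 - X - X ^ 4) * h13
    - (1 - 2 * X + X ^ 3 - X ^ 4) * (1 - X - X ^ 2 + X ^ 3 - X ^ 4) * (1 - X - X ^ 4) * h23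
    + (1 - X + X ^ 2) * (1 - X - X ^ 2) * (1 - 2 * X + X ^ 3 - X ^ 4) *
      (1 - X - X ^ 2 + X ^ 3 - X ^ 4) * h123
end

section
/- For all integers n ≥ k ≥ 0, the sum, over all multisets M of size n − k with elements taken from {1, 2, ..., k}, of the product of the elements of M equals S(n,k), the Stirling number of the second kind. -/
/-!
Both sides satisfy the recurrence `a(n+1, k+1) = (k+1) a(n, k+1) + a(n, k)` of `S(n, k)`.
For `h_m(1, …, k) = ∑_{|M| = m} ∏ M`, split the multisets on `{1, …, k+1}` according to
whether they contain `k+1`. For partitions of `insert a s`, delete `a`: either `{a}` was a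
block, and we get a partition of `s` with one block fewer, or `a` sat in one of the blocks of
a partition of `s` with the same number of blocks.
-/

/-- The Stirling number of the second kind `S(n,k)`: the number of partitions of an
`n`-element set into exactly `k` nonempty blocks. -/
noncomputable def stirlingSecond (n k : ℕ) : ℕ :=
  Nat.card {P : Finpartition (Finset.univ : Finset (Fin n)) // P.parts.card = k}

open Finset

section CompleteHomogeneous

variable {α R : Type*} [DecidableEq α]

theorem Finset.sym_insert_succ (a : α) (s : Finset α) (n : ℕ) :
    (insert a s).sym (n + 1) = ((insert a s).sym n).image (Sym.cons a) ∪ s.sym (n + 1) := by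
  ext M
  simp only [mem_union, mem_image, mem_sym_iff]
  constructor
  · intro hM
    by_cases haM : a ∈ M
    · refine .inl ⟨M.erase a haM, fun b hb ↦ hM b ?_, Sym.cons_erase haM⟩
      rw [← Sym.cons_erase haM]
      exact Sym.mem_cons_of_mem hb
    · exact .inr fun b hb ↦ (mem_insert.mp (hM b hb)).resolve_left (by rintro rfl; exact haM hb)
  · rintro (⟨N, hN, rfl⟩ | hM) b hb
    · rcases Sym.mem_cons.mp hb with rfl | hb
      exacts [mem_insert_self b s, hN b hb]
    · exact mem_insert_of_mem (hM b hb)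

theorem Finset.disjoint_image_cons_sym {a : α} {s t : Finset α} (ha : a ∉ s) (n : ℕ) :
    Disjoint ((t.sym n).image (Sym.cons a)) (s.sym (n + 1)) := by
  refine disjoint_left.mpr fun M hM hM' ↦ ?_
  obtain ⟨N, -, rfl⟩ := mem_image.mp hM
  exact ha (mem_sym_iff.mp hM' a (Sym.mem_cons_self a N))

variable [CommSemiring R] [DecidableEq R]

def completeHomogeneous (s : Finset R) (m : ℕ) : R :=
  ∑ M ∈ s.sym m, (M : Multiset R).prod

theorem completeHomogeneous_zero (s : Finset R) : completeHomogeneous s 0 = 1 := by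
  rw [completeHomogeneous, sym_zero, sum_singleton]
  exact Multiset.prod_zero

theorem completeHomogeneous_insert_succ {x : R} {s : Finset R} (hx : x ∉ s) (m : ℕ) :
    completeHomogeneous (insert x s) (m + 1)
      = x * completeHomogeneous (insert x s) m + completeHomogeneous s (m + 1) := by
  rw [completeHomogeneous, sym_insert_succ, sum_union (disjoint_image_cons_sym hx m),
    sum_image fun M _ N _ h ↦ (Sym.cons_inj_right x M N).mp h, completeHomogeneous, mul_sum]
  simp only [Sym.coe_cons, Multiset.prod_cons]
  rfl

end CompleteHomogeneous

theorem completeHomogeneous_Icc_eq_stirlingSecond (k m : ℕ) :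
    completeHomogeneous (Icc 1 k) m = Nat.stirlingSecond (k + m) k := by
  induction k generalizing m with
  | zero => cases m <;> rfl
  | succ k ihk =>
    induction m with
    | zero =>
      rw [completeHomogeneous_zero, add_zero, Nat.stirlingSecond_self]
    | succ m ihm =>
      have hIcc : Icc 1 (k + 1) = insert (k + 1) (Icc 1 k) :=
        (insert_Icc_right_eq_Icc_add_one (by omega)).symm
      rw [hIcc, completeHomogeneous_insert_succ (by simp), ← hIcc, ihm, ihk,
        show k + (m + 1) = k + 1 + m by omega]
      exact (Nat.stirlingSecond_succ_succ _ _).symm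

namespace Finpartition

variable {α : Type*} [DecidableEq α] {a : α} {s t : Finset α}

def extendSingleton (ha : a ∉ s) (Q : Finpartition s) : Finpartition (insert a s) :=
  Q.extend (b := {a}) (singleton_ne_empty a) (disjoint_singleton_right.mpr ha)
    (by rw [sup_eq_union, union_comm, ← insert_eq])

def insertIntoPart (ha : a ∉ s) (Q : Finpartition s) (ht : t ∈ Q.parts) :
    Finpartition (insert a s) where
  parts := insert (insert a t) (Q.parts.erase t)
  supIndep := by
    have hrest : (Q.parts.erase t).sup id ⊆ s :=
      Finset.sup_le fun u hu ↦ Q.le (mem_of_mem_erase hu)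
    refine (Q.supIndep.subset (erase_subset t Q.parts)).insert
      (disjoint_insert_left.mpr ⟨fun h ↦ ha (hrest h), ?_⟩)
    exact Q.supIndep (erase_subset t Q.parts) ht (notMem_erase t Q.parts)
  sup_parts := by
    have := Q.sup_parts
    rw [← insert_erase ht, sup_insert] at this
    rw [sup_insert, id, sup_eq_union, insert_union]
    exact congrArg (insert a) this
  bot_notMem := by
    rw [bot_eq_empty, mem_insert, not_or]
    exact ⟨(insert_ne_empty a t).symm, fun h ↦ Q.bot_notMem (mem_of_mem_erase h)⟩

theorem insertIntoPart_parts (ha : a ∉ s) (Q : Finpartition s) (ht : t ∈ Q.parts) :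
    (Q.insertIntoPart ha ht).parts = insert (insert a t) (Q.parts.erase t) :=
  rfl

theorem notMem_of_mem_parts (ha : a ∉ s) {Q : Finpartition s} {u : Finset α}
    (hu : u ∈ Q.parts) : a ∉ u :=
  fun h ↦ ha (Q.le hu h)

theorem erase_part_nonempty {u : Finset α} (P : Finpartition u) (hau : a ∈ u)
    (h : P.part a ≠ {a}) : ((P.part a).erase a).Nonempty := by
  have haP := P.mem_part_self.mpr hau
  rwa [erase_nonempty haP, nontrivial_iff_ne_singleton haP]

def avoidPoint (ha : a ∉ s) (P : Finpartition (insert a s)) : Finpartition s :=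
  (P.avoid {a}).copy (by rw [sdiff_singleton_eq_erase, erase_insert ha])

theorem mem_avoidPoint_parts (ha : a ∉ s) (P : Finpartition (insert a s)) :
    t ∈ (P.avoidPoint ha).parts ↔
      (t ∈ P.parts ∧ t ≠ P.part a) ∨ (t = (P.part a).erase a ∧ t.Nonempty) := by
  have hsdiff (d) (hd : d ∈ P.parts) (hda : d ≠ P.part a) : d \ {a} = d := by
    rw [sdiff_singleton_eq_erase, erase_eq_of_notMem fun h ↦ hda (P.part_eq_of_mem hd h).symm]
  rw [avoidPoint, copy_parts, mem_avoid]
  constructor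
  · rintro ⟨d, hd, hsub, rfl⟩
    by_cases hda : d = P.part a
    · exact .inr ⟨by rw [hda, sdiff_singleton_eq_erase], sdiff_nonempty.mpr hsub⟩
    · exact .inl ⟨(hsdiff d hd hda).symm ▸ hd, (hsdiff d hd hda).symm ▸ hda⟩
  · rintro (⟨ht, hta⟩ | ⟨rfl, hne⟩)
    · exact ⟨t, ht, sdiff_nonempty.mp ((hsdiff t ht hta).symm ▸ P.nonempty_of_mem_parts ht),
        hsdiff t ht hta⟩
    · refine ⟨P.part a, P.part_mem.mpr (mem_insert_self a s), sdiff_nonempty.mp ?_,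
        sdiff_singleton_eq_erase a _⟩
      rwa [sdiff_singleton_eq_erase]

theorem avoidPoint_parts_of_part_eq (ha : a ∉ s) {P : Finpartition (insert a s)}
    (h : P.part a = {a}) : (P.avoidPoint ha).parts = P.parts.erase {a} := by
  ext t
  simp [mem_avoidPoint_parts, h, and_comm]

theorem avoidPoint_parts_of_part_ne (ha : a ∉ s) {P : Finpartition (insert a s)}
    (h : P.part a ≠ {a}) :
    (P.avoidPoint ha).parts = insert ((P.part a).erase a) (P.parts.erase (P.part a)) := by
  have hne := P.erase_part_nonempty (mem_insert_self a s) h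
  ext t
  rw [mem_avoidPoint_parts, mem_insert, mem_erase]
  constructor
  · rintro (⟨ht, hta⟩ | ⟨rfl, -⟩)
    exacts [.inr ⟨hta, ht⟩, .inl rfl]
  · rintro (rfl | ⟨hta, ht⟩)
    exacts [.inr ⟨rfl, hne⟩, .inl ⟨ht, hta⟩]

theorem part_extendSingleton (ha : a ∉ s) (Q : Finpartition s) :
    (Q.extendSingleton ha).part a = {a} :=
  part_eq_of_mem _ (mem_insert_self _ _) (mem_singleton_self a)

theorem card_extendSingleton (ha : a ∉ s) (Q : Finpartition s) :
    #(Q.extendSingleton ha).parts = #Q.parts + 1 :=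
  card_extend ..

theorem avoidPoint_extendSingleton (ha : a ∉ s) (Q : Finpartition s) :
    (Q.extendSingleton ha).avoidPoint ha = Q := by
  ext1
  rw [avoidPoint_parts_of_part_eq ha (part_extendSingleton ha Q), extendSingleton, extend_parts,
    erase_insert fun h ↦ notMem_of_mem_parts ha h (mem_singleton_self a)]

theorem extendSingleton_avoidPoint (ha : a ∉ s) {P : Finpartition (insert a s)}
    (h : P.part a = {a}) : (P.avoidPoint ha).extendSingleton ha = P := by
  ext1
  rw [extendSingleton, extend_parts, avoidPoint_parts_of_part_eq ha h,
    insert_erase (h ▸ P.part_mem.mpr (mem_insert_self a s))]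

theorem part_insertIntoPart (ha : a ∉ s) (Q : Finpartition s) (ht : t ∈ Q.parts) :
    (Q.insertIntoPart ha ht).part a = insert a t :=
  part_eq_of_mem _ (mem_insert_self _ _) (mem_insert_self a t)

theorem part_insertIntoPart_ne (ha : a ∉ s) (Q : Finpartition s) (ht : t ∈ Q.parts) :
    (Q.insertIntoPart ha ht).part a ≠ {a} := by
  rw [part_insertIntoPart]
  intro h
  obtain ⟨b, hb⟩ := Q.nonempty_of_mem_parts ht
  obtain rfl : b = a := mem_singleton.mp (h ▸ mem_insert_of_mem hb)
  exact notMem_of_mem_parts ha ht hb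

theorem card_insertIntoPart (ha : a ∉ s) (Q : Finpartition s) (ht : t ∈ Q.parts) :
    #(Q.insertIntoPart ha ht).parts = #Q.parts := by
  have hnew : insert a t ∉ Q.parts.erase t :=
    fun h ↦ notMem_of_mem_parts ha (mem_of_mem_erase h) (mem_insert_self a t)
  rw [insertIntoPart_parts, card_insert_of_notMem hnew, card_erase_add_one ht]

theorem avoidPoint_insertIntoPart (ha : a ∉ s) (Q : Finpartition s) (ht : t ∈ Q.parts) :
    (Q.insertIntoPart ha ht).avoidPoint ha = Q := by
  ext1
  rw [avoidPoint_parts_of_part_ne ha (part_insertIntoPart_ne ha Q ht), part_insertIntoPart,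
    erase_insert (notMem_of_mem_parts ha ht), insertIntoPart_parts,
    erase_insert fun h ↦ notMem_of_mem_parts ha (mem_of_mem_erase h) (mem_insert_self a t),
    insert_erase ht]

theorem erase_part_mem_avoidPoint (ha : a ∉ s) {P : Finpartition (insert a s)}
    (h : P.part a ≠ {a}) : (P.part a).erase a ∈ (P.avoidPoint ha).parts := by
  rw [avoidPoint_parts_of_part_ne ha h]
  exact mem_insert_self _ _

theorem insertIntoPart_avoidPoint (ha : a ∉ s) {P : Finpartition (insert a s)}
    (h : P.part a ≠ {a}) :
    (P.avoidPoint ha).insertIntoPart ha (erase_part_mem_avoidPoint ha h) = P := by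
  have hpart : P.part a ∈ P.parts := P.part_mem.mpr (mem_insert_self a s)
  have herase : (P.part a).erase a ∉ P.parts.erase (P.part a) := by
    intro hmem
    obtain ⟨b, hb⟩ := P.erase_part_nonempty (mem_insert_self a s) h
    exact (mem_erase.mp hmem).1
      (P.eq_of_mem_parts (mem_of_mem_erase hmem) hpart hb (mem_of_mem_erase hb))
  ext1
  rw [insertIntoPart_parts, insert_erase (P.mem_part_self.mpr (mem_insert_self a s)),
    avoidPoint_parts_of_part_ne ha h, erase_insert herase, insert_erase hpart]

theorem card_filter_part_eq_singleton (ha : a ∉ s) (k : ℕ) :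
    #{P : Finpartition (insert a s) | #P.parts = k + 1 ∧ P.part a = {a}}
      = #{Q : Finpartition s | #Q.parts = k} := by
  refine card_bij' (fun P _ ↦ P.avoidPoint ha) (fun Q _ ↦ Q.extendSingleton ha) ?_ ?_ ?_ ?_
  · intro P hP
    simp only [mem_filter, mem_univ, true_and] at hP ⊢
    have := card_extendSingleton ha (P.avoidPoint ha)
    rw [extendSingleton_avoidPoint ha hP.2] at this
    omega
  · intro Q hQ
    simp only [mem_filter, mem_univ, true_and] at hQ ⊢
    exact ⟨by rw [card_extendSingleton, hQ], part_extendSingleton ha Q⟩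
  · exact fun P hP ↦ extendSingleton_avoidPoint ha (mem_filter.mp hP).2.2
  · exact fun Q _ ↦ avoidPoint_extendSingleton ha Q

theorem card_filter_part_ne_singleton (ha : a ∉ s) (k : ℕ) :
    #{P : Finpartition (insert a s) | #P.parts = k ∧ P.part a ≠ {a}}
      = k * #{Q : Finpartition s | #Q.parts = k} := by
  rw [mul_comm, ← sum_const_nat fun Q hQ ↦ (mem_filter.mp hQ).2, ← card_sigma]
  refine card_bij' (fun P hP ↦ ⟨P.avoidPoint ha, (P.part a).erase a⟩)
    (fun x hx ↦ x.1.insertIntoPart ha (mem_sigma.mp hx).2) ?_ ?_ ?_ ?_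
  · intro P hP
    simp only [mem_filter, mem_univ, true_and] at hP
    refine mem_sigma.mpr ⟨mem_filter.mpr ⟨mem_univ _, ?_⟩, erase_part_mem_avoidPoint ha hP.2⟩
    rw [← hP.1, ← card_insertIntoPart ha _ (erase_part_mem_avoidPoint ha hP.2),
      insertIntoPart_avoidPoint ha hP.2]
  · rintro ⟨Q, t⟩ hx
    obtain ⟨hQ, ht⟩ := mem_sigma.mp hx
    simp only [mem_filter, mem_univ, true_and] at hQ ⊢
    exact ⟨(card_insertIntoPart ha Q ht).trans hQ, part_insertIntoPart_ne ha Q ht⟩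
  · exact fun P hP ↦ insertIntoPart_avoidPoint ha (mem_filter.mp hP).2.2
  · rintro ⟨Q, t⟩ hx
    have ht := (mem_sigma.mp hx).2
    refine Sigma.ext (avoidPoint_insertIntoPart ha Q ht) (heq_of_eq ?_)
    rw [part_insertIntoPart, erase_insert (notMem_of_mem_parts ha ht)]

theorem card_filter_card_parts_insert (ha : a ∉ s) (k : ℕ) :
    #{P : Finpartition (insert a s) | #P.parts = k + 1}
      = (k + 1) * #{Q : Finpartition s | #Q.parts = k + 1}
        + #{Q : Finpartition s | #Q.parts = k} := by
  rw [← card_filter_part_eq_singleton ha k, ← card_filter_part_ne_singleton ha (k + 1),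
    ← card_filter_add_card_filter_not (p := fun P : Finpartition _ ↦ P.part a = {a}),
    filter_filter, filter_filter]
  exact add_comm _ _

theorem card_filter_card_parts_eq_stirlingSecond (s : Finset α) (k : ℕ) :
    #{P : Finpartition s | #P.parts = k} = Nat.stirlingSecond #s k := by
  induction s using Finset.induction_on generalizing k with
  | empty =>
    have hparts (P : Finpartition (∅ : Finset α)) : #P.parts = 0 :=
      card_eq_zero.mpr (parts_eq_empty_iff.mpr rfl)
    have : Unique (Finpartition (∅ : Finset α)) := inferInstanceAs (Unique (Finpartition ⊥))
    cases k with
    | zero => simp [hparts]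
    | succ k => simp [hparts]
  | insert a s ha ih =>
    rw [card_insert_of_notMem ha]
    cases k with
    | zero =>
      rw [Nat.stirlingSecond_succ_zero]
      exact card_eq_zero.mpr (filter_eq_empty_iff.mpr fun P _ ↦
        (P.parts_nonempty (insert_ne_empty a s)).card_pos.ne')
    | succ k =>
      rw [card_filter_card_parts_insert ha, ih, ih, Nat.stirlingSecond_succ_succ]

end Finpartition

theorem stirlingSecond_eq_nat_stirlingSecond (n k : ℕ) :
    stirlingSecond n k = Nat.stirlingSecond n k := by
  rw [stirlingSecond, Nat.card_eq_fintype_card, Fintype.card_subtype,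
    Finpartition.card_filter_card_parts_eq_stirlingSecond, card_univ, Fintype.card_fin]

/-- for `n ≥ k ≥ 0`, the sum over all multisets `M` of size `n − k` with
elements in `{1, …, k}` of the product of the elements of `M` equals `S(n,k)`. -/
theorem stmt_10 (n k : ℕ) (h : k ≤ n) :
    ∑ M ∈ (Finset.Icc 1 k).sym (n - k), (M : Multiset ℕ).prod = stirlingSecond n k := by
  obtain ⟨m, rfl⟩ := Nat.exists_eq_add_of_le h
  rw [Nat.add_sub_cancel_left, stirlingSecond_eq_nat_stirlingSecond]
  exact completeHomogeneous_Icc_eq_stirlingSecond k m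
end

section
/- For every m ≥ 1, let γ_m(n) be the number of Dyck paths of semilength n whose mex is m, and let Γ_m(X) = Σ_{n≥0} γ_m(n) X^n ∈ ℤ⟦X⟧. Then Γ_m(X) is rational in X and C(X): there exist two-variable polynomials P, Q with integer coefficients such that Q(X, C(X)) is a nonzero power series and Q(X, C(X)) · Γ_m(X) = P(X, C(X)) in ℤ⟦X⟧. -/
open DyckStep

/-- A Dyck word `p` has a peak at height `h`: an up-step immediately followed by a
down-step, such that the prefix ending with that up-step has `h` more `U`s than `D`s. -/
def DyckWord.HasPeakAtHeight (p : DyckWord) (h : ℕ) : Prop :=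
  ∃ i, i + 1 < p.toList.length ∧ p.toList.getD i D = U ∧ p.toList.getD (i + 1) U = D ∧
    (p.toList.take (i + 1)).count U = (p.toList.take (i + 1)).count D + h

/-- The mex of a Dyck word: the smallest positive integer `m` such that the word has no
peak at height `m`. -/
noncomputable def DyckWord.mex (p : DyckWord) : ℕ :=
  sInf {m : ℕ | 0 < m ∧ ¬ p.HasPeakAtHeight m}

/-- The generating function of the Catalan numbers, `C(X) = Σ_{n≥0} catalan(n) Xⁿ`. -/
noncomputable def catalanGF : PowerSeries ℤ :=
  PowerSeries.mk fun n => (catalan n : ℤ)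

/-!
Let `A_S` count Dyck paths with no peak at any height in a finite set `S ⊆ ℤ`. In the first-return
decomposition `p = U q D r` the peaks of `q` are lifted by one and a new peak at height `1`
appears exactly when `q` is empty, so `A_S = 1 + X (A_{S - 1} - [1 ∈ S]) A_S`. The power series
`f` with `Q(X, C) f = P(X, C)` for some `Q(X, C) ≠ 0` form a ring, which contains `C = A_S` when
`S` has no positive element, and which contains `f = 1 + X B f` whenever it contains `B`, because
`(1 - X B) f = 1` and `1 - X B ≠ 0`. Induction on `max S` puts every `A_S` in this ring. Finally
`mex p = m` says that `p` has peaks at `1, …, m - 1` but not at `m`, so inclusion–exclusion writes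
`Γ_m` as an integer combination of the `A_S`.
-/

namespace Subring

variable {A : Type*} [CommRing A] [IsDomain A] (R : Subring A)

def fractions : Subring A where
  carrier := {a | ∃ q ∈ R, q ≠ 0 ∧ q * a ∈ R}
  mul_mem' := by
    rintro a b ⟨q, hq, hq0, hqa⟩ ⟨s, hs, hs0, hsb⟩
    refine ⟨q * s, R.mul_mem hq hs, mul_ne_zero hq0 hs0, ?_⟩
    rw [mul_mul_mul_comm]
    exact R.mul_mem hqa hsb
  one_mem' := ⟨1, R.one_mem, one_ne_zero, by simp [R.one_mem]⟩
  add_mem' := by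
    rintro a b ⟨q, hq, hq0, hqa⟩ ⟨s, hs, hs0, hsb⟩
    refine ⟨q * s, R.mul_mem hq hs, mul_ne_zero hq0 hs0, ?_⟩
    rw [show q * s * (a + b) = q * a * s + q * (s * b) by ring]
    exact R.add_mem (R.mul_mem hqa hs) (R.mul_mem hq hsb)
  zero_mem' := ⟨1, R.one_mem, one_ne_zero, by simp [R.zero_mem]⟩
  neg_mem' := by
    rintro a ⟨q, hq, hq0, hqa⟩
    exact ⟨q, hq, hq0, by simpa using R.neg_mem hqa⟩

variable {R}

lemma le_fractions : R ≤ R.fractions :=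
  fun a ha => ⟨1, R.one_mem, one_ne_zero, by simpa using ha⟩

lemma mem_fractions_of_mul_mem {a b : A} (ha : a ∈ R.fractions) (ha0 : a ≠ 0)
    (hab : a * b ∈ R.fractions) : b ∈ R.fractions := by
  obtain ⟨q, hq, hq0, hqa⟩ := ha
  obtain ⟨s, hs, hs0, hsab⟩ := hab
  refine ⟨s * (q * a), R.mul_mem hs hqa, mul_ne_zero hs0 (mul_ne_zero hq0 ha0), ?_⟩
  rw [show s * (q * a) * b = q * (s * (a * b)) by ring]
  exact R.mul_mem hq hsab

end Subring

namespace Finset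

lemma ite_forall_eq_sum_powerset {ι R : Type*} [DecidableEq ι] [CommRing R]
    (s : Finset ι) (P : ι → Prop) [DecidablePred P] :
    (if ∀ k ∈ s, P k then 1 else 0 : R) =
      ∑ T ∈ s.powerset, (-1) ^ #T * if ∀ k ∈ T, ¬ P k then 1 else 0 := by
  have h : ∀ k, (if P k then 1 else 0 : R) = 1 - if ¬ P k then 1 else 0 := fun k => by
    split_ifs <;> simp
  rw [← prod_boole, prod_congr rfl fun k _ => h k, prod_sub]
  simp only [prod_const_one, mul_one, prod_boole]

end Finset

namespace List

def stepHeight (l : List DyckStep) : ℤ := l.count U - l.count D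

@[simp] lemma stepHeight_nil : ([] : List DyckStep).stepHeight = 0 := rfl

@[simp] lemma stepHeight_cons_U (l : List DyckStep) :
    (U :: l).stepHeight = l.stepHeight + 1 := by
  simp [stepHeight]; ring

@[simp] lemma stepHeight_cons_D (l : List DyckStep) :
    (D :: l).stepHeight = l.stepHeight - 1 := by
  simp [stepHeight]; ring

@[simp] lemma stepHeight_append (l₁ l₂ : List DyckStep) :
    (l₁ ++ l₂).stepHeight = l₁.stepHeight + l₂.stepHeight := by
  simp [stepHeight, count_append]; ring

-- Integer heights make the peak calculus below valid for arbitrary step lists.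
def HasPeakAt (l : List DyckStep) (h : ℤ) : Prop :=
  ∃ A B, l = A ++ U :: D :: B ∧ A.stepHeight + 1 = h

lemma hasPeakAt_cons_U (l : List DyckStep) (h : ℤ) :
    (U :: l).HasPeakAt h ↔ (l.head? = some D ∧ h = 1) ∨ l.HasPeakAt (h - 1) := by
  constructor
  · rintro ⟨_ | ⟨a, A⟩, B, e, rfl⟩
    · simp_all
    · obtain ⟨rfl, rfl⟩ := List.cons_eq_cons.mp e
      exact .inr ⟨A, B, rfl, by simp⟩
  · rintro (⟨hl, rfl⟩ | ⟨A, B, rfl, hA⟩)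
    · obtain ⟨B, rfl⟩ := List.head?_eq_some_iff.mp hl
      exact ⟨[], B, rfl, by simp⟩
    · exact ⟨U :: A, B, rfl, by simp; linarith⟩

lemma hasPeakAt_cons_D (l : List DyckStep) (h : ℤ) :
    (D :: l).HasPeakAt h ↔ l.HasPeakAt (h + 1) := by
  constructor
  · rintro ⟨_ | ⟨a, A⟩, B, e, rfl⟩
    · simp at e
    · obtain ⟨rfl, rfl⟩ := List.cons_eq_cons.mp e
      exact ⟨A, B, rfl, by simp⟩
  · rintro ⟨A, B, rfl, hA⟩
    exact ⟨D :: A, B, rfl, by simp; linarith⟩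

lemma hasPeakAt_append {l₁ : List DyckStep} (hl₁ : l₁.getLast? ≠ some U) (l₂ : List DyckStep)
    (h : ℤ) : (l₁ ++ l₂).HasPeakAt h ↔ l₁.HasPeakAt h ∨ l₂.HasPeakAt (h - l₁.stepHeight) := by
  constructor
  · rintro ⟨A, B, e, rfl⟩
    rcases List.append_eq_append_iff.mp e with ⟨A', rfl, rfl⟩ | ⟨C, rfl, e'⟩
    · exact .inr ⟨A', B, rfl, by simp; ring⟩
    · rcases C with _ | ⟨x, _ | ⟨y, C⟩⟩
      · exact .inr ⟨[], B, by simpa using e'.symm, by simp⟩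
      · obtain ⟨rfl, -⟩ := List.cons_eq_cons.mp e'
        simp at hl₁
      · obtain ⟨rfl, e''⟩ := List.cons_eq_cons.mp e'
        obtain ⟨rfl, rfl⟩ := List.cons_eq_cons.mp e''
        exact .inl ⟨A, C, rfl, rfl⟩
  · rintro (⟨A, B, rfl, hA⟩ | ⟨A, B, rfl, hA⟩)
    · exact ⟨A, B ++ l₂, by simp, hA⟩
    · exact ⟨l₁ ++ A, B, by simp, by simp; linarith⟩

end List

namespace DyckWord

section Peaks

open List

lemma toList_nest_add (q r : DyckWord) :
    (q.nest + r).toList = U :: (q.toList ++ D :: r.toList) := by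
  change [U] ++ q.toList ++ [D] ++ r.toList = _
  simp

@[simp] lemma stepHeight_toList (p : DyckWord) : p.toList.stepHeight = 0 := by
  simp [stepHeight, p.count_U_eq_count_D]

lemma getLast?_toList_ne_U (p : DyckWord) : p.toList.getLast? ≠ some U := by
  rcases eq_or_ne p 0 with rfl | hp
  · simp [show (0 : DyckWord).toList = [] from rfl]
  · rw [getLast?_eq_some_getLast (toList_ne_nil.mpr hp), getLast_eq_D]
    simp

lemma head?_toList_append_eq_D {p : DyckWord} {l : List DyckStep} :
    (p.toList ++ l).head? = some D ↔ p = 0 ∧ l.head? = some D := by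
  rcases eq_or_ne p 0 with rfl | hp
  · simp [show (0 : DyckWord).toList = [] from rfl]
  · rw [head?_append_of_ne_nil _ (toList_ne_nil.mpr hp),
      head?_eq_some_head (toList_ne_nil.mpr hp), head_eq_U]
    simp [hp]

lemma pos_of_hasPeakAt {p : DyckWord} {h : ℤ} (hp : p.toList.HasPeakAt h) : 0 < h := by
  obtain ⟨A, B, e, rfl⟩ := hp
  have := p.count_D_le_count_U A.length
  rw [e, take_left] at this
  simp only [stepHeight]
  omega

lemma hasPeakAt_nest_add (q r : DyckWord) (h : ℤ) :
    (q.nest + r).toList.HasPeakAt h ↔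
      (q = 0 ∧ h = 1) ∨ q.toList.HasPeakAt (h - 1) ∨ r.toList.HasPeakAt h := by
  rw [toList_nest_add, hasPeakAt_cons_U, hasPeakAt_append q.getLast?_toList_ne_U,
    hasPeakAt_cons_D, head?_toList_append_eq_D]
  simp

lemma hasPeakAtHeight_iff (p : DyckWord) (h : ℕ) :
    p.HasPeakAtHeight h ↔ p.toList.HasPeakAt h := by
  simp only [HasPeakAtHeight, HasPeakAt, stepHeight]
  generalize p.toList = l
  constructor
  · rintro ⟨i, hi, hU, hD, hcount⟩
    rw [getD_eq_getElem _ _ (by omega)] at hU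
    rw [getD_eq_getElem _ _ hi] at hD
    refine ⟨l.take i, l.drop (i + 2), ?_, ?_⟩
    · rw [← hU, ← hD, ← drop_eq_getElem_cons, ← drop_eq_getElem_cons, take_append_drop]
    · rw [take_add_one, getElem?_eq_getElem (by omega), hU] at hcount
      simp at hcount
      omega
  · rintro ⟨A, B, rfl, hA⟩
    refine ⟨A.length, by simp, by simp, by simp [getD_eq_getElem?_getD], ?_⟩
    simp [take_append, take_of_length_le (Nat.le_succ _)]
    omega

end Peaks

section Avoidance

open Finset

def Avoids (S : Finset ℤ) (p : DyckWord) : Prop := ∀ h ∈ S, ¬ p.toList.HasPeakAt h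

lemma avoids_zero (S : Finset ℤ) : (0 : DyckWord).Avoids S := by
  rintro h - ⟨A, B, e, -⟩
  simp [show (0 : DyckWord).toList = [] from rfl] at e

lemma avoids_of_nonpos {S : Finset ℤ} (hS : ∀ s ∈ S, s ≤ 0) (p : DyckWord) : p.Avoids S :=
  fun h hh hp => (pos_of_hasPeakAt hp).not_ge (hS h hh)

lemma avoids_nest_add (S : Finset ℤ) (q r : DyckWord) :
    (q.nest + r).Avoids S ↔ (q.Avoids (S.image (· - 1)) ∧ (1 ∈ S → q ≠ 0)) ∧ r.Avoids S := by
  simp only [Avoids, hasPeakAt_nest_add, forall_mem_image, not_or]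
  constructor
  · intro hS
    exact ⟨⟨fun h hh => (hS h hh).2.1, fun h1 hq => (hS 1 h1).1 ⟨hq, rfl⟩⟩,
      fun h hh => (hS h hh).2.2⟩
  · rintro ⟨⟨hq, h1⟩, hr⟩ h hh
    exact ⟨fun ⟨hq0, e⟩ => h1 (e ▸ hh) hq0, hq hh, hr h hh⟩

lemma avoids_map_natCast {S : Finset ℕ} {p : DyckWord} :
    p.Avoids (S.map Nat.castEmbedding) ↔ ∀ h ∈ S, ¬ p.HasPeakAtHeight h := by
  simp [Avoids, hasPeakAtHeight_iff]

lemma mex_eq_iff {p : DyckWord} {m : ℕ} (hm : 0 < m) :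
    p.mex = m ↔ (∀ k ∈ Ico 1 m, p.HasPeakAtHeight k) ∧ ¬ p.HasPeakAtHeight m := by
  simp only [mem_Ico, mex]
  constructor
  · intro h
    have hne : {k : ℕ | 0 < k ∧ ¬ p.HasPeakAtHeight k}.Nonempty :=
      Set.nonempty_iff_ne_empty.mpr fun he => by simp [he] at h; omega
    refine ⟨fun k ⟨hk, hkm⟩ => ?_, h ▸ (Nat.sInf_mem hne).2⟩
    by_contra hk'
    exact Nat.notMem_of_lt_sInf (s := {k : ℕ | 0 < k ∧ ¬ p.HasPeakAtHeight k}) (by omega)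
      ⟨hk, hk'⟩
  · rintro ⟨hlt, hm'⟩
    refine le_antisymm (Nat.sInf_le ⟨hm, hm'⟩) (le_csInf ⟨m, hm, hm'⟩ fun k ⟨hk, hk'⟩ => ?_)
    by_contra! hkm
    exact hk' (hlt k ⟨hk, hkm⟩)

end Avoidance

section GeneratingFunctions

open Finset PowerSeries

def ofSemilength (n : ℕ) : Finset DyckWord :=
  univ.map (Function.Embedding.subtype fun p : DyckWord => p.semilength = n)

@[simp] lemma mem_ofSemilength {n : ℕ} {p : DyckWord} :
    p ∈ ofSemilength n ↔ p.semilength = n := by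
  simp [ofSemilength]

lemma semilength_eq_zero_iff {p : DyckWord} : p.semilength = 0 ↔ p = 0 := by
  refine ⟨fun h => ?_, fun h => h ▸ semilength_zero⟩
  have := p.two_mul_semilength_eq_length
  rw [h, mul_zero, eq_comm, List.length_eq_zero_iff, toList_eq_nil] at this
  exact this

noncomputable def countGF (P : DyckWord → Prop) : ℤ⟦X⟧ :=
  PowerSeries.mk fun n => (Nat.card {p : DyckWord // p.semilength = n ∧ P p} : ℤ)

open Classical in
lemma natCard_eq_card_filter (P : DyckWord → Prop) (n : ℕ) :
    Nat.card {p : DyckWord // p.semilength = n ∧ P p} = #{p ∈ ofSemilength n | P p} := by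
  rw [← Set.ncard_coe_finset, ← Nat.card_coe_set_eq]
  exact Nat.card_congr (Equiv.subtypeEquivRight fun p => by simp)

open Classical in
lemma coeff_countGF (P : DyckWord → Prop) (n : ℕ) :
    coeff n (countGF P) = #{p ∈ ofSemilength n | P p} := by
  rw [countGF, coeff_mk, natCard_eq_card_filter]

lemma ofSemilength_zero : ofSemilength 0 = {0} := by
  ext p
  simp [semilength_eq_zero_iff]

lemma countGF_of_forall {P : DyckWord → Prop} (hP : ∀ p, P p) : countGF P = catalanGF := by
  ext n
  rw [countGF, catalanGF, coeff_mk, coeff_mk, ← card_dyckWord_semilength_eq_catalan,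
    ← Nat.card_eq_fintype_card]
  exact congrArg _ (Nat.card_congr (Equiv.subtypeEquivRight fun p => by simp [hP]))

lemma countGF_and_ne_zero {P : DyckWord → Prop} (h0 : P 0) :
    countGF (fun p => P p ∧ p ≠ 0) = countGF P - 1 := by
  classical
  ext n
  rw [map_sub, coeff_countGF, coeff_countGF, natCast_card_filter, natCast_card_filter, coeff_one]
  rcases n with _ | n
  · simp [ofSemilength_zero, filter_singleton, h0]
  · refine (sub_zero _).symm.trans (congrArg₂ _ (sum_congr rfl fun p hp => ?_) (by simp))
    have hp0 : p ≠ 0 := by rintro rfl; simp at hp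
    simp [hp0]

open Classical in
lemma countGF_eq_sum_smul {P : DyckWord → Prop} {ι : Type*} (s : Finset ι) (c : ι → ℤ)
    (Q : ι → DyckWord → Prop)
    (h : ∀ p, (if P p then 1 else 0) = ∑ i ∈ s, c i * if Q i p then 1 else 0) :
    countGF P = ∑ i ∈ s, c i • countGF (Q i) := by
  ext n
  rw [map_sum]
  simp only [map_zsmul, coeff_countGF, natCast_card_filter, h, smul_eq_mul, mul_sum]
  exact sum_comm

open Classical in
lemma card_filter_ofSemilength_succ {P Q R : DyckWord → Prop}
    (h : ∀ q r, P (q.nest + r) ↔ Q q ∧ R r) (n : ℕ) :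
    #{p ∈ ofSemilength (n + 1) | P p} =
      ∑ ij ∈ antidiagonal n, #{q ∈ ofSemilength ij.1 | Q q} * #{r ∈ ofSemilength ij.2 | R r} := by
  simp_rw [← card_product]
  rw [← card_sigma]
  refine card_nbij' (fun p => ⟨(p.insidePart.semilength, p.outsidePart.semilength),
      (p.insidePart, p.outsidePart)⟩) (fun x => x.2.1.nest + x.2.2) ?_ ?_ ?_ ?_
  · intro p hp
    simp only [coe_filter, mem_ofSemilength, Set.mem_ofPred_eq] at hp
    have hp0 : p ≠ 0 := by rintro rfl; simp at hp
    have hPp := hp.2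
    rw [← nest_insidePart_add_outsidePart hp0, h] at hPp
    have := semilength_insidePart_add_semilength_outsidePart_add_one hp0
    simp only [coe_sigma, Set.mem_sigma_iff, mem_coe, HasAntidiagonal.mem_antidiagonal,
      mem_product, mem_filter, mem_ofSemilength, true_and]
    exact ⟨by omega, hPp.1, hPp.2⟩
  · rintro ⟨⟨i, j⟩, q, r⟩ hx
    simp only [coe_sigma, Set.mem_sigma_iff, mem_coe, HasAntidiagonal.mem_antidiagonal,
      mem_product, mem_filter, mem_ofSemilength] at hx
    obtain ⟨hij, ⟨rfl, hq⟩, rfl, hr⟩ := hx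
    simp only [coe_filter, mem_ofSemilength, Set.mem_ofPred_eq, h, semilength_add,
      semilength_nest]
    exact ⟨by omega, hq, hr⟩
  · intro p hp
    have hp0 : p ≠ 0 := by rintro rfl; simp at hp
    exact nest_insidePart_add_outsidePart hp0
  · rintro ⟨⟨i, j⟩, q, r⟩ hx
    simp only [coe_sigma, Set.mem_sigma_iff, mem_coe, HasAntidiagonal.mem_antidiagonal,
      mem_product, mem_filter, mem_ofSemilength] at hx
    obtain ⟨-, ⟨rfl, -⟩, rfl, -⟩ := hx
    simp [insidePart_add, outsidePart_add]

lemma countGF_eq_one_add_X_mul {P Q R : DyckWord → Prop} (h0 : P 0)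
    (h : ∀ q r, P (q.nest + r) ↔ Q q ∧ R r) : countGF P = 1 + X * countGF Q * countGF R := by
  classical
  ext n
  rcases n with _ | n
  · simp [coeff_countGF, ofSemilength_zero, filter_singleton, h0]
  · rw [mul_assoc, map_add, coeff_succ_X_mul, coeff_mul, coeff_one, if_neg n.succ_ne_zero,
      zero_add]
    simp only [coeff_countGF, card_filter_ofSemilength_succ h]
    push_cast
    rfl

end GeneratingFunctions

end DyckWord

open Finset PowerSeries DyckWord

noncomputable abbrev catalanFractions : Subring ℤ⟦X⟧ :=
  (MvPolynomial.aeval (R := ℤ) ![X, catalanGF]).range.toSubring.fractions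

lemma mem_catalanFractions {f : ℤ⟦X⟧} : f ∈ catalanFractions ↔ ∃ P Q : MvPolynomial (Fin 2) ℤ,
    MvPolynomial.aeval ![X, catalanGF] Q ≠ 0 ∧
      MvPolynomial.aeval ![X, catalanGF] Q * f = MvPolynomial.aeval ![X, catalanGF] P := by
  constructor
  · rintro ⟨_, ⟨Q, rfl⟩, hQ, P, hP⟩
    exact ⟨P, Q, hQ, hP.symm⟩
  · rintro ⟨P, Q, hQ, hP⟩
    exact ⟨_, ⟨Q, rfl⟩, hQ, P, hP.symm⟩

lemma aeval_mem_catalanFractions (P : MvPolynomial (Fin 2) ℤ) :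
    MvPolynomial.aeval ![X, catalanGF] P ∈ catalanFractions :=
  Subring.le_fractions (AlgHom.mem_range_self _ P)

lemma X_mem_catalanFractions : (X : ℤ⟦X⟧) ∈ catalanFractions := by
  simpa using aeval_mem_catalanFractions (MvPolynomial.X 0)

lemma catalanGF_mem_catalanFractions : catalanGF ∈ catalanFractions := by
  simpa using aeval_mem_catalanFractions (MvPolynomial.X 1)

lemma mem_catalanFractions_of_eq_one_add_X_mul {B f : ℤ⟦X⟧} (hB : B ∈ catalanFractions)
    (hf : f = 1 + X * B * f) : f ∈ catalanFractions := by
  have h1 : 1 - X * B ≠ 0 := fun h => by simpa using congrArg constantCoeff h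
  refine Subring.mem_fractions_of_mul_mem
    (sub_mem (one_mem _) (mul_mem X_mem_catalanFractions hB)) h1 ?_
  rw [show (1 - X * B) * f = 1 by linear_combination hf]
  exact one_mem _

lemma countGF_avoids_mem_catalanFractions_of_le (N : ℕ) {S : Finset ℤ} (hS : ∀ s ∈ S, s ≤ N) :
    countGF (Avoids S) ∈ catalanFractions := by
  induction N generalizing S with
  | zero =>
    rw [countGF_of_forall (avoids_of_nonpos (by simpa using hS))]
    exact catalanGF_mem_catalanFractions
  | succ N ih =>
    have hS' := ih (S := S.image (· - 1)) (forall_mem_image.mpr fun s hs => by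
      have := hS s hs
      push_cast at this
      linarith)
    refine mem_catalanFractions_of_eq_one_add_X_mul ?_
      (countGF_eq_one_add_X_mul (avoids_zero S) (avoids_nest_add S))
    by_cases h1 : 1 ∈ S
    · simp only [h1, forall_const]
      rw [countGF_and_ne_zero (avoids_zero _)]
      exact sub_mem hS' (one_mem _)
    · simpa only [h1, false_implies, and_true] using hS'

lemma countGF_avoids_mem_catalanFractions (S : Finset ℤ) :
    countGF (Avoids S) ∈ catalanFractions := by
  obtain ⟨M, hM⟩ := S.bddAbove
  exact countGF_avoids_mem_catalanFractions_of_le M.toNat fun s hs =>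
    (hM hs).trans (Int.self_le_toNat M)

lemma countGF_mex_eq {m : ℕ} (hm : 0 < m) :
    countGF (fun p => p.mex = m) = ∑ T ∈ (Ico 1 m).powerset,
      (-1) ^ #T • countGF (Avoids ((insert m T).map Nat.castEmbedding)) := by
  classical
  refine countGF_eq_sum_smul _ _ _ fun p => ?_
  simp only [mex_eq_iff hm, avoids_map_natCast, forall_mem_insert]
  by_cases hpm : p.HasPeakAtHeight m
  · simp [hpm]
  · simpa [hpm] using ite_forall_eq_sum_powerset (R := ℤ) (Ico 1 m) p.HasPeakAtHeight

/-- for every `m ≥ 1`, the generating function of Dyck paths (by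
semilength) with mex `m` is rational in `X` and `C(X)`: there are two-variable integer
polynomials `P, Q` with `Q(X, C(X)) ≠ 0` and
`Q(X, C(X)) · Γ_m(X) = P(X, C(X))` in `ℤ⟦X⟧`. -/
theorem stmt_14 (m : ℕ) (hm : 1 ≤ m) :
    ∃ P Q : MvPolynomial (Fin 2) ℤ,
      MvPolynomial.aeval ![PowerSeries.X, catalanGF] Q ≠ 0 ∧
      MvPolynomial.aeval ![PowerSeries.X, catalanGF] Q *
          PowerSeries.mk
            (fun n => (Nat.card {p : DyckWord // p.semilength = n ∧ p.mex = m} : ℤ)) =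
        MvPolynomial.aeval ![PowerSeries.X, catalanGF] P := by
  have hmem : countGF (fun p => p.mex = m) ∈ catalanFractions := by
    rw [countGF_mex_eq hm]
    exact sum_mem fun T _ => zsmul_mem (countGF_avoids_mem_catalanFractions _) _
  exact mem_catalanFractions.mp hmem
end
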